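/- arXiv:1408.1987 — 4 statements merged into one kernel-verified Lean document; each statement's English description precedes it below -/
import Mathlib

section
/- Let x = σ₁²/(hp) - σ₂²/(gp) with h, g, p, σ₁², σ₂² > 0, and let R(α) = log₂(1 + (1-α)hp/σ₁²) - log₂(1 + (1-α)gp/(αgp + σ₂²)) on [0,1]. If -1 ≤ x < 1, then R attains its maximum over [0,1] at α* = 1/2 + x/2. -/
theorem stmt_1 (h g p σ1 σ2 : ℝ) (hh : 0 < h) (hg : 0 < g) (hp : 0 < p)
    (hσ1 : 0 < σ1) (hσ2 : 0 < σ2)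
    (x : ℝ) (hx : x = σ1 / (h * p) - σ2 / (g * p))
    (hx1 : -1 ≤ x) (hx2 : x < 1)
    (R : ℝ → ℝ)
    (hR : R = fun α => Real.logb 2 (1 + (1 - α) * h * p / σ1)
      - Real.logb 2 (1 + (1 - α) * g * p / (α * g * p + σ2))) :
    (1 / 2 + x / 2) ∈ Set.Icc (0:ℝ) 1 ∧
      ∀ α ∈ Set.Icc (0:ℝ) 1, R α ≤ R (1 / 2 + x / 2) := by
  have hhp : 0 < h * p := mul_pos hh hp
  have hgp : 0 < g * p := mul_pos hg hp
  have hxe : x * (h * p) * (g * p) = σ1 * (g * p) - σ2 * (h * p) := by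
    rw [hx]; field_simp
  set α0 : ℝ := 1 / 2 + x / 2 with hα0
  have hmem : α0 ∈ Set.Icc (0:ℝ) 1 := ⟨by rw [hα0]; linarith, by rw [hα0]; linarith⟩
  refine ⟨hmem, ?_⟩
  intro α hα
  obtain ⟨ha1, ha2⟩ := hα
  obtain ⟨hb1, hb2⟩ := hmem
  have key : ∀ β : ℝ, 0 ≤ β → β ≤ 1 →
      R β = Real.logb 2 ((σ1 + (1 - β) * (h * p)) * (β * (g * p) + σ2)
        / (σ1 * ((g * p) + σ2))) ∧
      0 < (σ1 + (1 - β) * (h * p)) * (β * (g * p) + σ2) := by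
    intro β hβ0 hβ1
    have h1β : 0 ≤ (1 - β) := by linarith
    have hD : 0 < β * g * p + σ2 := by nlinarith
    have hA : 0 < 1 + (1 - β) * h * p / σ1 := by
      have : 0 ≤ (1 - β) * h * p / σ1 :=
        div_nonneg (by nlinarith) hσ1.le
      linarith
    have hB : 0 < 1 + (1 - β) * g * p / (β * g * p + σ2) := by
      have : 0 ≤ (1 - β) * g * p / (β * g * p + σ2) :=
        div_nonneg (by nlinarith) hD.le
      linarith
    have hpos : 0 < (σ1 + (1 - β) * (h * p)) * (β * (g * p) + σ2) := by
      apply mul_pos (by nlinarith) (by nlinarith)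
    refine ⟨?_, hpos⟩
    rw [hR]
    simp only
    rw [← Real.logb_div (ne_of_gt hA) (ne_of_gt hB)]
    congr 1
    have hC : σ1 * ((g * p) + σ2) ≠ 0 := by positivity
    field_simp
    ring
  obtain ⟨hRα, hQα⟩ := key α ha1 ha2
  obtain ⟨hRα0, hQα0⟩ := key α0 hb1 hb2
  rw [hRα, hRα0]
  have hC : 0 < σ1 * ((g * p) + σ2) := by positivity
  apply Real.logb_le_logb_of_le (by norm_num : (1:ℝ) < 2) (by positivity)
  have heq : (σ1 + (1 - α0) * (h * p)) * (α0 * (g * p) + σ2)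
      - (σ1 + (1 - α) * (h * p)) * (α * (g * p) + σ2)
      = (h * p) * (g * p) * (α0 - α) ^ 2 := by
    rw [hα0]
    linear_combination (α - (1 / 2 + x / 2)) * hxe
  have hq : (σ1 + (1 - α) * (h * p)) * (α * (g * p) + σ2)
      ≤ (σ1 + (1 - α0) * (h * p)) * (α0 * (g * p) + σ2) := by
    nlinarith [mul_nonneg (mul_pos hhp hgp).le (sq_nonneg (α0 - α))]
  gcongr
end

section
/- Let x = σ₁²/(hp) - σ₂²/(gp) with h, g, p, σ₁², σ₂² > 0, and let R(α) = log₂(1 + (1-α)hp/σ₁²) - log₂(1 + (1-α)gp/(αgp + σ₂²)) on [0,1]. If x < -1, then R is strictly decreasing on [0,1], so R is maximized at α* = 0. -/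
theorem stmt_2 (h g p σ1 σ2 : ℝ) (hh : 0 < h) (hg : 0 < g) (hp : 0 < p)
    (hσ1 : 0 < σ1) (hσ2 : 0 < σ2)
    (x : ℝ) (hx : x = σ1 / (h * p) - σ2 / (g * p))
    (hx1 : x < -1)
    (R : ℝ → ℝ)
    (hR : R = fun α => Real.logb 2 (1 + (1 - α) * h * p / σ1)
      - Real.logb 2 (1 + (1 - α) * g * p / (α * g * p + σ2))) :
    StrictAntiOn R (Set.Icc (0:ℝ) 1) ∧
      ∀ α ∈ Set.Icc (0:ℝ) 1, R α ≤ R 0 := by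
  subst hx hR
  have hhp : 0 < h * p := mul_pos hh hp
  have hgp : 0 < g * p := mul_pos hg hp
  have key : σ1 * (g * p) - (h * p) * σ2 < -1 * ((h * p) * (g * p)) := by
    rw [div_sub_div _ _ (ne_of_gt hhp) (ne_of_gt hgp),
      div_lt_iff₀ (mul_pos hhp hgp)] at hx1
    exact hx1
  have main : StrictAntiOn (fun α => Real.logb 2 (1 + (1 - α) * h * p / σ1)
      - Real.logb 2 (1 + (1 - α) * g * p / (α * g * p + σ2))) (Set.Icc (0:ℝ) 1) := by
    intro a ha b hb hab
    obtain ⟨ha0, ha1⟩ := ha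
    obtain ⟨hb0, hb1⟩ := hb
    have hda : 0 < a * g * p + σ2 := by nlinarith
    have hdb : 0 < b * g * p + σ2 := by nlinarith
    have hua : (0:ℝ) < 1 + (1 - a) * h * p / σ1 := by
      have : 0 ≤ (1 - a) * h * p / σ1 := by
        apply div_nonneg _ hσ1.le; nlinarith
      linarith
    have hub : (0:ℝ) < 1 + (1 - b) * h * p / σ1 := by
      have : 0 ≤ (1 - b) * h * p / σ1 := by
        apply div_nonneg _ hσ1.le; nlinarith
      linarith
    have hva : (0:ℝ) < 1 + (1 - a) * g * p / (a * g * p + σ2) := by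
      have : 0 ≤ (1 - a) * g * p / (a * g * p + σ2) := by
        apply div_nonneg _ hda.le; nlinarith
      linarith
    have hvb : (0:ℝ) < 1 + (1 - b) * g * p / (b * g * p + σ2) := by
      have : 0 ≤ (1 - b) * g * p / (b * g * p + σ2) := by
        apply div_nonneg _ hdb.le; nlinarith
      linarith
    simp only
    rw [sub_lt_sub_iff, ← Real.logb_mul (ne_of_gt hub) (ne_of_gt hva),
      ← Real.logb_mul (ne_of_gt hua) (ne_of_gt hvb)]
    apply Real.logb_lt_logb one_lt_two (mul_pos hub hva)
    have eub : 1 + (1 - b) * h * p / σ1 = (σ1 + (1 - b) * h * p) / σ1 := by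
      field_simp
    have eua : 1 + (1 - a) * h * p / σ1 = (σ1 + (1 - a) * h * p) / σ1 := by
      field_simp
    have eva : 1 + (1 - a) * g * p / (a * g * p + σ2)
        = (g * p + σ2) / (a * g * p + σ2) := by
      field_simp; ring
    have evb : 1 + (1 - b) * g * p / (b * g * p + σ2)
        = (g * p + σ2) / (b * g * p + σ2) := by
      field_simp; ring
    rw [eub, eua, eva, evb, div_mul_div_comm, div_mul_div_comm,
      div_lt_div_iff₀ (by positivity) (by positivity)]
    have hbr : (0:ℝ) < h * p * σ2 - σ1 * (g * p) - h * p * (g * p)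
        + h * p * (g * p) * (a + b) := by
      nlinarith [mul_nonneg (mul_pos hhp hgp).le (show (0:ℝ) ≤ a + b by linarith)]
    have hpos : (0:ℝ) < σ1 * (g * p + σ2) * ((b - a) * (h * p * σ2 - σ1 * (g * p)
        - h * p * (g * p) + h * p * (g * p) * (a + b))) :=
      mul_pos (mul_pos hσ1 (by positivity))
        (mul_pos (sub_pos.mpr hab) hbr)
    have hkey2 : (σ1 + (1 - a) * h * p) * (g * p + σ2) * (σ1 * (a * g * p + σ2))
        - (σ1 + (1 - b) * h * p) * (g * p + σ2) * (σ1 * (b * g * p + σ2))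
        = σ1 * (g * p + σ2) * ((b - a) * (h * p * σ2 - σ1 * (g * p)
          - h * p * (g * p) + h * p * (g * p) * (a + b))) := by ring
    linarith
  refine ⟨main, fun α hα => ?_⟩
  rcases eq_or_lt_of_le hα.1 with h0 | h0
  · rw [← h0]
  · exact le_of_lt (main ⟨le_refl 0, zero_le_one⟩ hα h0)
end

section
/- Let x = σ₁²/(hp) - σ₂²/(gp) with h, g, p, σ₁², σ₂² > 0, and let R(α) = log₂(1 + (1-α)hp/σ₁²) - log₂(1 + (1-α)gp/(αgp + σ₂²)) on [0,1]. If x ≥ 1, then R is non-decreasing on [0,1], so R is maximized at α* = 1. -/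
theorem stmt_3 (h g p σ1 σ2 : ℝ) (hh : 0 < h) (hg : 0 < g) (hp : 0 < p)
    (hσ1 : 0 < σ1) (hσ2 : 0 < σ2)
    (x : ℝ) (hx : x = σ1 / (h * p) - σ2 / (g * p))
    (hx1 : 1 ≤ x)
    (R : ℝ → ℝ)
    (hR : R = fun α => Real.logb 2 (1 + (1 - α) * h * p / σ1)
      - Real.logb 2 (1 + (1 - α) * g * p / (α * g * p + σ2))) :
    MonotoneOn R (Set.Icc (0:ℝ) 1) ∧
      ∀ α ∈ Set.Icc (0:ℝ) 1, R α ≤ R 1 := by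
  subst hx
  -- key scalar inequality
  have hkey : h * p * (g * p) ≤ σ1 * (g * p) - σ2 * (h * p) := by
    have hmul : 1 * (h * p * (g * p)) ≤ (σ1 / (h * p) - σ2 / (g * p)) * (h * p * (g * p)) := by
      apply mul_le_mul_of_nonneg_right hx1
      positivity
    have hhp : h * p ≠ 0 := by positivity
    have hgp : g * p ≠ 0 := by positivity
    field_simp at hmul
    nlinarith [hmul]
  have hmono : MonotoneOn R (Set.Icc (0:ℝ) 1) := by
    intro α hα β hβ hab
    obtain ⟨hα0, hα1⟩ := hα
    obtain ⟨hβ0, hβ1⟩ := hβ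
    have hdα : (0:ℝ) < α * g * p + σ2 := by nlinarith [mul_nonneg (mul_nonneg hα0 hg.le) hp.le]
    have hdβ : (0:ℝ) < β * g * p + σ2 := by nlinarith [mul_nonneg (mul_nonneg hβ0 hg.le) hp.le]
    have hAα : (0:ℝ) < 1 + (1 - α) * h * p / σ1 := by
      have : 0 ≤ (1 - α) * h * p / σ1 := by
        apply div_nonneg _ hσ1.le; nlinarith [mul_pos hh hp]
      linarith
    have hAβ : (0:ℝ) < 1 + (1 - β) * h * p / σ1 := by
      have : 0 ≤ (1 - β) * h * p / σ1 := by
        apply div_nonneg _ hσ1.le; nlinarith [mul_pos hh hp]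
      linarith
    have hBα : (0:ℝ) < 1 + (1 - α) * g * p / (α * g * p + σ2) := by
      have : 0 ≤ (1 - α) * g * p / (α * g * p + σ2) := by
        apply div_nonneg _ hdα.le; nlinarith [mul_pos hg hp]
      linarith
    have hBβ : (0:ℝ) < 1 + (1 - β) * g * p / (β * g * p + σ2) := by
      have : 0 ≤ (1 - β) * g * p / (β * g * p + σ2) := by
        apply div_nonneg _ hdβ.le; nlinarith [mul_pos hg hp]
      linarith
    have key : (1 + (1 - α) * h * p / σ1) * (1 + (1 - β) * g * p / (β * g * p + σ2))
        ≤ (1 + (1 - β) * h * p / σ1) * (1 + (1 - α) * g * p / (α * g * p + σ2)) := by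
      rw [show (1 + (1 - α) * h * p / σ1) = (σ1 + (1 - α) * h * p) / σ1 by field_simp,
        show (1 + (1 - β) * h * p / σ1) = (σ1 + (1 - β) * h * p) / σ1 by field_simp,
        show (1 + (1 - α) * g * p / (α * g * p + σ2))
            = (α * g * p + σ2 + (1 - α) * g * p) / (α * g * p + σ2) by field_simp,
        show (1 + (1 - β) * g * p / (β * g * p + σ2))
            = (β * g * p + σ2 + (1 - β) * g * p) / (β * g * p + σ2) by field_simp,
        div_mul_div_comm, div_mul_div_comm,
        div_le_div_iff₀ (by positivity) (by positivity)]
      have hN : (σ1 + (1 - α) * h * p) * (α * g * p + σ2)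
          ≤ (σ1 + (1 - β) * h * p) * (β * g * p + σ2) := by
        nlinarith [mul_le_mul_of_nonneg_left hkey (sub_nonneg.mpr hab),
          mul_nonneg (mul_nonneg (sub_nonneg.mpr hab)
            (mul_pos (mul_pos hh hp) (mul_pos hg hp)).le)
            (by nlinarith : (0:ℝ) ≤ 2 - α - β)]
      have hc : (0:ℝ) ≤ σ1 * (g * p + σ2) := by positivity
      nlinarith [mul_le_mul_of_nonneg_left hN hc]
    simp only [hR]
    have hlog : Real.logb 2 ((1 + (1 - α) * h * p / σ1) * (1 + (1 - β) * g * p / (β * g * p + σ2)))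
        ≤ Real.logb 2 ((1 + (1 - β) * h * p / σ1) * (1 + (1 - α) * g * p / (α * g * p + σ2))) :=
      Real.logb_le_logb_of_le one_lt_two (by positivity) key
    rw [Real.logb_mul hAα.ne' hBβ.ne', Real.logb_mul hAβ.ne' hBα.ne'] at hlog
    linarith
  refine ⟨hmono, fun α hα => hmono hα (by simp) hα.2⟩
end

section
/- Fix h, g, σ₁², σ₂² > 0 with hσ₂² > gσ₁², and fix p > 0. Define R(α) = log₂(1 + (1-α)hp/σ₁²) - log₂(1 + (1-α)gp/(αgp + σ₂²)) on [0,1]. Then for x = σ₁²/(hp) - σ₂²/(gp) (which satisfies x < 0), the maximizer α* = max(0, min(1, 1/2 + x/2)) satisfies R(α*) ≥ R(0); i.e., using artificial noise never decreases the secrecy rate when it can be cancelled at the IR. -/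
/-! Clearing denominators, `R(α) = log₂ ((σ₁ + (1 - α) h p) (α g p + σ₂) / (σ₁ (g p + σ₂)))`, so
`R(α) ≥ R(0)` amounts to comparing the numerator with its value `(σ₁ + h p) σ₂` at `α = 0`. Their
difference is `h p · g p · α (1 + x - α)`, which is nonnegative at `α = max 0 ((1 + x) / 2)`; since
`x < 0` this is the clipped maximizer. -/

open Real

/-- `a = h p` and `b = g p` are the received signal powers at the IR and the ER. -/
noncomputable def secrecyRate (a b σ1 σ2 α : ℝ) : ℝ :=
  logb 2 (1 + (1 - α) * a / σ1) - logb 2 (1 + (1 - α) * b / (α * b + σ2))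

section

variable {a b σ1 σ2 α : ℝ}

lemma secrecyRate_eq_logb (ha : 0 ≤ a) (hb : 0 ≤ b) (hσ1 : 0 < σ1) (hσ2 : 0 < σ2)
    (hα0 : 0 ≤ α) (hα1 : α ≤ 1) :
    secrecyRate a b σ1 σ2 α =
      logb 2 ((σ1 + (1 - α) * a) * (α * b + σ2) / (σ1 * (b + σ2))) := by
  have h1α : 0 ≤ 1 - α := by linarith
  have hαb : 0 < α * b + σ2 := by positivity
  rw [secrecyRate, ← logb_div (by positivity) (by positivity)]
  congr 1
  field_simp
  ring

lemma secrecyRate_zero_le (ha : 0 < a) (hb : 0 < b) (hσ1 : 0 < σ1) (hσ2 : 0 < σ2)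
    (hα0 : 0 ≤ α) (hα1 : α ≤ 1) (hgain : 0 ≤ α * (1 + (σ1 / a - σ2 / b) - α)) :
    secrecyRate a b σ1 σ2 0 ≤ secrecyRate a b σ1 σ2 α := by
  rw [secrecyRate_eq_logb ha.le hb.le hσ1 hσ2 le_rfl zero_le_one,
    secrecyRate_eq_logb ha.le hb.le hσ1 hσ2 hα0 hα1]
  refine logb_le_logb_of_le one_lt_two (by positivity) (div_le_div_of_nonneg_right ?_ (by positivity))
  have hexcess : (σ1 + (1 - α) * a) * (α * b + σ2) - (σ1 + (1 - 0) * a) * (0 * b + σ2) =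
      a * b * (α * (1 + (σ1 / a - σ2 / b) - α)) := by
    field_simp
    ring
  nlinarith [mul_nonneg (mul_pos ha hb).le hgain]

end

theorem stmt_9 (h g p σ1 σ2 : ℝ) (hh : 0 < h) (hg : 0 < g) (hp : 0 < p)
    (hσ1 : 0 < σ1) (hσ2 : 0 < σ2)
    (hdom : h * σ2 > g * σ1)
    (x : ℝ) (hx : x = σ1 / (h * p) - σ2 / (g * p))
    (R : ℝ → ℝ)
    (hR : R = fun α => Real.logb 2 (1 + (1 - α) * h * p / σ1)
      - Real.logb 2 (1 + (1 - α) * g * p / (α * g * p + σ2))) :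
    x < 0 ∧ R (max 0 (min 1 (1 / 2 + x / 2))) ≥ R 0 := by
  have hhp : 0 < h * p := by positivity
  have hgp : 0 < g * p := by positivity
  have hx0 : x < 0 := by
    rw [hx, sub_neg, div_lt_div_iff₀ hhp hgp]
    nlinarith
  have hRrate : R = secrecyRate (h * p) (g * p) σ1 σ2 := by
    funext α
    simp only [hR, secrecyRate, mul_assoc]
  refine ⟨hx0, ?_⟩
  rw [hRrate, min_eq_right (by linarith)]
  apply secrecyRate_zero_le hhp hgp hσ1 hσ2 (le_max_left _ _) (max_le zero_le_one (by linarith))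
  rw [← hx]
  rcases le_total (1 / 2 + x / 2) 0 with hneg | hnonneg
  · rw [max_eq_left hneg, zero_mul]
  · rw [max_eq_right hnonneg]
    nlinarith
end
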